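/- arXiv:1711.01755 — 2 statements merged into one kernel-verified Lean document; each statement's English description precedes it below -/
import Mathlib

section
/- Let α > 0 and let y : ℝ² → ℝ be twice continuously differentiable and satisfy the wave equation ∂²y/∂t² = α² ∂²y/∂x² at every point of ℝ². Then there exist twice differentiable functions f, g : ℝ → ℝ such that y(x,t) = f(x + α·t) + g(x − α·t) for all (x,t) ∈ ℝ². -/
/-!
d'Alembert's argument in characteristic directions: writing points as `a • (α, 1) + b • (α, -1)`,
the wave equation together with the symmetry of the second derivative says that the mixed second
derivative of `y` along `(α, 1)` and `(α, -1)` vanishes. So the derivative along `(α, -1)` is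
invariant under translation along `(α, 1)`, hence `y (a • u + b • v) - y (a • u)` does not depend
on `a`, which splits `y` into a function of `a` plus a function of `b`.
-/

section LineDerivative

variable {E F : Type*} [NormedAddCommGroup E] [NormedSpace ℝ E]
  [NormedAddCommGroup F] [NormedSpace ℝ F]

theorem hasDerivAt_comp_add_smul {f : E → F} {p d : E} {s : ℝ}
    (hf : DifferentiableAt ℝ f (p + s • d)) :
    HasDerivAt (fun r : ℝ => f (p + r • d)) (fderiv ℝ f (p + s • d) d) s :=
  hf.hasFDerivAt.comp_hasDerivAt s
    ((((hasDerivAt_id s).smul_const d).const_add p).congr_deriv (one_smul ℝ d))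

theorem fderiv_fderiv_apply_left {f : E → F} {p : E} (hf : DifferentiableAt ℝ (fderiv ℝ f) p)
    (v w : E) : fderiv ℝ (fun q => fderiv ℝ f q v) p w = fderiv ℝ (fderiv ℝ f) p w v := by
  rw [fderiv_clm_apply hf (differentiableAt_const v)]
  simp

theorem deriv_deriv_comp_add_smul {f : E → F} (hf : ContDiff ℝ 2 f) (p d : E) (s : ℝ) :
    deriv (deriv fun r : ℝ => f (p + r • d)) s = fderiv ℝ (fderiv ℝ f) (p + s • d) d d := by
  have hf' : Differentiable ℝ (fderiv ℝ f) := (hf.fderiv_right le_rfl).differentiable one_ne_zero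
  have hderiv : deriv (fun r : ℝ => f (p + r • d)) = fun r => fderiv ℝ f (p + r • d) d :=
    funext fun r => (hasDerivAt_comp_add_smul (hf.differentiable two_ne_zero _)).deriv
  rw [hderiv, (hasDerivAt_comp_add_smul (f := fun q => fderiv ℝ f q d)
    ((hf' _).clm_apply (differentiableAt_const d))).deriv, fderiv_fderiv_apply_left (hf' _)]

theorem apply_add_smul_eq_of_fderiv_apply_eq_zero {f : E → F} {d : E} (hf : Differentiable ℝ f)
    (h : ∀ p, fderiv ℝ f p d = 0) (p : E) (s : ℝ) : f (p + s • d) = f p := by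
  have hderiv (r : ℝ) : HasDerivAt (fun r : ℝ => f (p + r • d)) 0 r :=
    h _ ▸ hasDerivAt_comp_add_smul (hf _)
  simpa using is_const_of_deriv_eq_zero (fun r => (hderiv r).differentiableAt)
    (fun r => (hderiv r).deriv) s 0

theorem apply_smul_add_smul_of_fderiv_fderiv_apply_eq_zero {f : E → F} (hf : ContDiff ℝ 2 f)
    {u v : E} (h : ∀ p, fderiv ℝ (fderiv ℝ f) p u v = 0) (a b : ℝ) :
    f (a • u + b • v) = f (a • u) + f (b • v) - f 0 := by
  have hf₁ : Differentiable ℝ f := hf.differentiable two_ne_zero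
  have hf' : Differentiable ℝ (fderiv ℝ f) := (hf.fderiv_right le_rfl).differentiable one_ne_zero
  have hv_const (q : E) : fderiv ℝ f (q + a • u) v = fderiv ℝ f q v :=
    apply_add_smul_eq_of_fderiv_apply_eq_zero (f := fun q => fderiv ℝ f q v)
      (fun q => (hf' q).clm_apply (differentiableAt_const v))
      (fun q => (fderiv_fderiv_apply_left (hf' q) v u).trans (h q)) q a
  have hdiff := apply_add_smul_eq_of_fderiv_apply_eq_zero (f := fun q => f (q + a • u) - f q)
    (d := v) ((hf₁.comp (differentiable_id.add_const _)).sub hf₁) (fun q => by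
      rw [fderiv_fun_sub (f := fun q => f (q + a • u)) (by fun_prop) (hf₁ q),
        fderiv_comp_add_right]
      simp [hv_const]) 0 b
  rw [zero_add, zero_add, sub_eq_iff_eq_add] at hdiff
  rw [add_comm (a • u), hdiff]
  abel

end LineDerivative

theorem apply_characteristics_eq_zero_of_wave (B : ℝ × ℝ →L[ℝ] ℝ × ℝ →L[ℝ] ℝ)
    {α : ℝ} (hsymm : B (1, 0) (0, 1) = B (0, 1) (1, 0))
    (hwave : B (0, 1) (0, 1) = α ^ 2 * B (1, 0) (1, 0)) :
    B (α, 1) (α, -1) = 0 := by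
  have hbasis (a b : ℝ) : ((a, b) : ℝ × ℝ) = a • ((1, 0) : ℝ × ℝ) + b • ((0, 1) : ℝ × ℝ) := by
    simp
  rw [hbasis α 1, hbasis α (-1)]
  simp only [map_add, map_smul, _root_.add_apply, _root_.smul_apply, smul_eq_mul, hsymm, hwave]
  ring

theorem wave_equation_general_solution (α : ℝ) (hα : 0 < α) (y : ℝ → ℝ → ℝ)
    (hy : ContDiff ℝ 2 (fun p : ℝ × ℝ => y p.1 p.2))
    (hwave : ∀ x t : ℝ,
      deriv (deriv (fun t' : ℝ => y x t')) t =
        α ^ 2 * deriv (deriv (fun x' : ℝ => y x' t)) x) :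
    ∃ f g : ℝ → ℝ, Differentiable ℝ f ∧ Differentiable ℝ (deriv f) ∧
      Differentiable ℝ g ∧ Differentiable ℝ (deriv g) ∧
      ∀ x t : ℝ, y x t = f (x + α * t) + g (x - α * t) := by
  set Y : ℝ × ℝ → ℝ := fun p => y p.1 p.2
  have hwave_fderiv (p : ℝ × ℝ) :
      fderiv ℝ (fderiv ℝ Y) p (0, 1) (0, 1) = α ^ 2 * fderiv ℝ (fderiv ℝ Y) p (1, 0) (1, 0) := by
    have ht := deriv_deriv_comp_add_smul hy (p.1, 0) (0, 1) p.2
    have hx := deriv_deriv_comp_add_smul hy (0, p.2) (1, 0) p.1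
    simp only [Prod.smul_mk, Prod.mk_add_mk, smul_eq_mul, mul_zero, mul_one, add_zero, zero_add]
      at ht hx
    rw [← ht, ← hx]
    exact hwave p.1 p.2
  have hsymm (p : ℝ × ℝ) : IsSymmSndFDerivAt ℝ Y p := hy.contDiffAt.isSymmSndFDerivAt (by simp)
  have hsplit := apply_smul_add_smul_of_fderiv_fderiv_apply_eq_zero hy fun p =>
    apply_characteristics_eq_zero_of_wave _ ((hsymm p).eq _ _) (hwave_fderiv p)
  have hf : ContDiff ℝ 2 fun ξ : ℝ => Y ((ξ / (2 * α)) • (α, 1)) := hy.comp (by fun_prop)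
  have hg : ContDiff ℝ 2 fun η : ℝ => Y ((η / (2 * α)) • (α, -1)) - Y 0 :=
    (hy.comp (by fun_prop)).sub contDiff_const
  refine ⟨_, _, hf.differentiable two_ne_zero, hf.differentiable_deriv_two,
    hg.differentiable two_ne_zero, hg.differentiable_deriv_two, fun x t => ?_⟩
  have hpoint : ((x + α * t) / (2 * α)) • ((α, 1) : ℝ × ℝ) + ((x - α * t) / (2 * α)) • (α, -1)
      = (x, t) := by
    simp only [Prod.smul_mk, smul_eq_mul, mul_one, mul_neg, Prod.mk_add_mk, Prod.mk.injEq]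
    constructor <;> field_simp <;> ring
  have hsum := hsplit ((x + α * t) / (2 * α)) ((x - α * t) / (2 * α))
  rw [hpoint] at hsum
  simp only [Y] at hsum ⊢
  linarith
end

section
/- Let B ⊆ ℝ² be an open disc (a metric ball) and let u : ℝ² → ℝ be harmonic on B, i.e. twice continuously differentiable on B with ∂²u/∂x² + ∂²u/∂y² = 0 on B. Then there exists a function f : ℂ → ℂ that is complex differentiable at every point of the corresponding open disc {x + i·y : (x,y) ∈ B} ⊆ ℂ and satisfies Re f(x + i·y) = u(x,y) for all (x,y) ∈ B. -/
/-!
Transport `u` to `ℂ` through `z ↦ (re z, im z)`. Second derivatives along the coordinate lines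
are the diagonal values of the second Fréchet derivative, so the Laplace equation written with
`deriv (deriv _)` says that Mathlib's Laplacian of the transported function vanishes: it is
harmonic on the disc. On a disc a harmonic function is the real part of a holomorphic one, a
primitive of `∂ₓu - i ∂ᵧu` (`InnerProductSpace.HarmonicOnNhd.exists_analyticOnNhd_ball_re_eq`).
-/

open Complex InnerProductSpace Metric Topology

theorem deriv_deriv_comp_add_smul_s7 {E F : Type*} [NormedAddCommGroup E] [NormedSpace ℝ E]
    [NormedAddCommGroup F] [NormedSpace ℝ F] {f : E → F} {a v : E} {t : ℝ}
    (hf : ContDiffAt ℝ 2 f (a + t • v)) :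
    deriv (deriv fun s : ℝ => f (a + s • v)) t = iteratedFDeriv ℝ 2 f (a + t • v) ![v, v] := by
  have hline (s : ℝ) : HasDerivAt (fun s : ℝ => a + s • v) v s := by
    simpa using ((hasDerivAt_id s).smul_const v).const_add a
  have hfirst : (deriv fun s : ℝ => f (a + s • v)) =ᶠ[𝓝 t] fun s => fderiv ℝ f (a + s • v) v := by
    have hev : ∀ᶠ y in 𝓝 (a + t • v), ContDiffAt ℝ 2 f y := hf.eventually (by simp)
    filter_upwards [(hline t).continuousAt.eventually hev] with s hs
    exact ((hs.differentiableAt two_ne_zero).hasFDerivAt.comp_hasDerivAt s (hline s)).deriv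
  have hsecond : DifferentiableAt ℝ (fderiv ℝ f) (a + t • v) :=
    (hf.fderiv_right (m := 1) (by norm_num)).differentiableAt one_ne_zero
  have h : HasDerivAt (fun s : ℝ => fderiv ℝ f (a + s • v))
      (fderiv ℝ (fderiv ℝ f) (a + t • v) v) t :=
    hsecond.hasFDerivAt.comp_hasDerivAt t (hline t)
  rw [hfirst.deriv_eq, iteratedFDeriv_two_apply]
  simp only [Matrix.cons_val_zero, Matrix.cons_val_one]
  rw [(h.clm_apply (hasDerivAt_const t v)).deriv, map_zero, add_zero]

theorem Complex.dist_lt_abs_iff {z w : ℂ} {r : ℝ} :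
    dist z w < |r| ↔ (z.re - w.re) ^ 2 + (z.im - w.im) ^ 2 < r ^ 2 := by
  rw [dist_eq_re_im, ← Real.sqrt_sq_eq_abs, Real.sqrt_lt_sqrt_iff (by positivity)]

theorem harmonicOnNhd_of_deriv_deriv_add_deriv_deriv_eq_zero {U : Set (ℝ × ℝ)} (hU : IsOpen U)
    {u : ℝ × ℝ → ℝ} (hu : ContDiffOn ℝ 2 u U)
    (hΔ : ∀ p ∈ U,
      deriv (deriv fun x => u (x, p.2)) p.1 + deriv (deriv fun y => u (p.1, y)) p.2 = 0) :
    HarmonicOnNhd (fun z : ℂ => u (z.re, z.im)) {z | (z.re, z.im) ∈ U} := by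
  have hcd : ∀ z ∈ {z : ℂ | (z.re, z.im) ∈ U}, ContDiffAt ℝ 2 (fun z : ℂ => u (z.re, z.im)) z :=
    fun z hz => (hu.contDiffAt (hU.mem_nhds hz)).comp z equivRealProdCLM.contDiff.contDiffAt
  intro z hz
  refine ⟨hcd z hz, ?_⟩
  filter_upwards [(hU.preimage (by fun_prop)).mem_nhds hz] with w hw
  have hx_line : (w.im : ℂ) * I + w.re • (1 : ℂ) = w := by apply Complex.ext <;> simp
  have hy_line : (w.re : ℂ) + w.im • I = w := by apply Complex.ext <;> simp
  have hxx := deriv_deriv_comp_add_smul_s7 (hx_line ▸ hcd w hw)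
  have hyy := deriv_deriv_comp_add_smul_s7 (hy_line ▸ hcd w hw)
  rw [hx_line] at hxx
  rw [hy_line] at hyy
  simp only [laplacian_eq_iteratedFDeriv_complexPlane, Pi.zero_apply, ← hxx, ← hyy]
  simpa using hΔ _ hw

theorem harmonic_on_disc_has_holomorphic_completion_general
    (c : ℝ × ℝ) (r : ℝ)
    (B : Set (ℝ × ℝ)) (hB : B = {p : ℝ × ℝ | (p.1 - c.1) ^ 2 + (p.2 - c.2) ^ 2 < r ^ 2})
    (u : ℝ × ℝ → ℝ)
    (hu : ContDiffOn ℝ 2 u B)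
    (hharm : ∀ p ∈ B,
      deriv (deriv (fun x : ℝ => u (x, p.2))) p.1 +
        deriv (deriv (fun y : ℝ => u (p.1, y))) p.2 = 0) :
    ∃ f : ℂ → ℂ,
      (∀ p ∈ B, DifferentiableAt ℂ f (p.1 + p.2 * Complex.I)) ∧
      ∀ p ∈ B, (f (p.1 + p.2 * Complex.I)).re = u p := by
  have hB_open : IsOpen B := hB ▸ isOpen_lt (by fun_prop) continuous_const
  have hB_ball : {z : ℂ | (z.re, z.im) ∈ B} = ball (c.1 + c.2 * I) |r| := by
    ext z
    simp [hB, Complex.dist_lt_abs_iff]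
  have hharmonic : HarmonicOnNhd (fun z : ℂ => u (z.re, z.im)) (ball (c.1 + c.2 * I) |r|) :=
    hB_ball ▸ harmonicOnNhd_of_deriv_deriv_add_deriv_deriv_eq_zero hB_open hu hharm
  obtain ⟨f, hf_analytic, hf_re⟩ := hharmonic.exists_analyticOnNhd_ball_re_eq
  have hmem (p : ℝ × ℝ) (hp : p ∈ B) : (p.1 + p.2 * I : ℂ) ∈ ball (c.1 + c.2 * I) |r| := by
    simpa [← hB_ball] using hp
  exact ⟨f, fun p hp => (hf_analytic _ (hmem p hp)).differentiableAt,
    fun p hp => by simpa using hf_re (hmem p hp)⟩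

theorem harmonic_on_disc_has_holomorphic_completion
    (c : ℝ × ℝ) (r : ℝ) (hr : 0 < r)
    (B : Set (ℝ × ℝ)) (hB : B = {p : ℝ × ℝ | (p.1 - c.1) ^ 2 + (p.2 - c.2) ^ 2 < r ^ 2})
    (u : ℝ × ℝ → ℝ)
    (hu : ContDiffOn ℝ 2 u B)
    (hharm : ∀ p ∈ B,
      deriv (deriv (fun x : ℝ => u (x, p.2))) p.1 +
        deriv (deriv (fun y : ℝ => u (p.1, y))) p.2 = 0) :
    ∃ f : ℂ → ℂ,
      (∀ p ∈ B, DifferentiableAt ℂ f (p.1 + p.2 * Complex.I)) ∧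
      ∀ p ∈ B, (f (p.1 + p.2 * Complex.I)).re = u p :=
  harmonic_on_disc_has_holomorphic_completion_general c r B hB u hu hharm
end
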